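/- For all k ∈ ℤ and nonzero l ∈ ℤ, the commutator identity [a_n(l), x_n⁻(k)] = −([2l]_t/l) · x_n⁻(k+l) holds in M_{2n+1}(R). -/
import Mathlib


noncomputable section

open LaurentPolynomial

/-- The base field `F = ℚ(t)`. -/
abbrev F : Type := RatFunc ℚ

/-- The Laurent polynomial ring `R = F[z, z⁻¹]`. -/
abbrev R : Type := LaurentPolynomial F

/-- The generator `t` of `ℚ(t)`. -/
def t : F := RatFunc.X

/-- `q = t²`, so that `q_n = q^{1/2} = t` for type `B_n⁽¹⁾`. -/
def q : F := t ^ 2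

/-- The quantum integer `[m]_t = (t^m − t^{−m})/(t − t^{−1})` in the base `t`. -/
def qit (m : ℤ) : F := (t ^ m - t ^ (-m)) / (t - t⁻¹)

/-- The matrix unit `E_{ab} ∈ M_N(R)` in the 1-based labels
`v_1,…,v_n,v_0,v_{n̄},…,v_{1̄}` (so `v_0 ↔ n+1`, `v_{ī} ↔ 2n+2−i`). -/
def E (N a b : ℕ) : Matrix (Fin N) (Fin N) R :=
  Matrix.of fun r s => if (r : ℕ) + 1 = a ∧ (s : ℕ) + 1 = b then (1 : R) else 0

/-- The element `(q^c z)^k ∈ R`. -/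
def zq (c k : ℤ) : R := C (q ^ (c * k)) * T k

/-- `x_n⁺(k) = (q^n z)^k [2]_t E_{n,0} + (q^{n−1}z)^k E_{0,n̄}` in `M_{2n+1}(R)`. -/
def xpB (n : ℕ) (k : ℤ) : Matrix (Fin (2*n+1)) (Fin (2*n+1)) R :=
  (zq n k * C (qit 2)) • E (2*n+1) n (n+1) + zq ((n : ℤ) - 1) k • E (2*n+1) (n+1) (n+2)

/-- `x_n⁻(k) = (q^{n−1}z)^k [2]_t E_{n̄,0} + (q^n z)^k E_{0,n}` in `M_{2n+1}(R)`. -/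
def xmB (n : ℕ) (k : ℤ) : Matrix (Fin (2*n+1)) (Fin (2*n+1)) R :=
  (zq ((n : ℤ) - 1) k * C (qit 2)) • E (2*n+1) (n+2) (n+1) + zq n k • E (2*n+1) (n+1) n

/-- `a_n(l) = ([2l]_t/l)(q^{n−1}z)^l ((E_{n,n} − q^l E_{0,0}) + (E_{0,0} − q^l E_{n̄,n̄}))`
in `M_{2n+1}(R)`. -/
def aB (n : ℕ) (l : ℤ) : Matrix (Fin (2*n+1)) (Fin (2*n+1)) R :=
  (C (qit (2 * l) / (l : F)) * zq ((n : ℤ) - 1) l) •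
    ((E (2*n+1) n n - C (q ^ l) • E (2*n+1) (n+1) (n+1)) +
     (E (2*n+1) (n+1) (n+1) - C (q ^ l) • E (2*n+1) (n+2) (n+2)))

lemma E_mul_same (N a b d : ℕ) (hb1 : 1 ≤ b) (hb2 : b ≤ N) :
    E N a b * E N b d = E N a d := by
  ext r s
  simp only [E, Matrix.mul_apply, Matrix.of_apply]
  rw [Finset.sum_eq_single (⟨b-1, by omega⟩ : Fin N)]
  · simp only [Fin.val_mk]
    have hb : b - 1 + 1 = b := by omega
    by_cases h1 : (r:ℕ)+1 = a <;> by_cases h2 : (s:ℕ)+1 = d <;> simp [h1, h2, hb]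
  · intro j _ hj
    have : (j:ℕ) + 1 ≠ b := by
      intro h; apply hj; apply Fin.ext; simp; omega
    simp [this]
  · simp
lemma E_mul_ne (N a b c d : ℕ) (h : b ≠ c) : E N a b * E N c d = 0 := by
  refine Matrix.ext fun r s => ?_
  simp only [E, Matrix.mul_apply, Matrix.of_apply, Matrix.zero_apply]
  apply Finset.sum_eq_zero
  intro j _
  by_cases h1 : (j:ℕ)+1 = b
  · have : (j:ℕ)+1 ≠ c := by omega
    simp [this]
  · simp [h1]
lemma q_ne : q ≠ 0 := pow_ne_zero _ RatFunc.X_ne_zero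

lemma zq_mul (c k l : ℤ) : zq c k * zq c l = zq c (k+l) := by
  rw [zq, zq, zq, mul_add, zpow_add₀ q_ne, map_mul, T_add]; ring

lemma zq_shift (c l : ℤ) : zq c l * C (q ^ l) = zq (c+1) l := by
  rw [zq, zq, add_mul, one_mul, zpow_add₀ q_ne, map_mul]; ring

set_option maxHeartbeats 2000000 in
/-- `[a_n(l), x_n⁻(k)] = −([2l]_t/l) x_n⁻(k+l)` in `M_{2n+1}(R)`. -/
theorem aB_xmB_comm (n : ℕ) (hn : 2 ≤ n) (k l : ℤ) (hl : l ≠ 0) :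
    aB n l * xmB n k - xmB n k * aB n l =
      (-(C (qit (2 * l) / (l : F)))) • xmB n (k + l) := by
  have h1 : E (2*n+1) (n+1) (n+1) * E (2*n+1) (n+1) n = E (2*n+1) (n+1) n :=
    E_mul_same _ _ _ _ (by omega) (by omega)
  have h2 : E (2*n+1) (n+2) (n+2) * E (2*n+1) (n+2) (n+1) = E (2*n+1) (n+2) (n+1) :=
    E_mul_same _ _ _ _ (by omega) (by omega)
  have h3 : E (2*n+1) (n+2) (n+1) * E (2*n+1) (n+1) (n+1) = E (2*n+1) (n+2) (n+1) :=
    E_mul_same _ _ _ _ (by omega) (by omega)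
  have h4 : E (2*n+1) (n+1) n * E (2*n+1) n n = E (2*n+1) (n+1) n :=
    E_mul_same _ _ _ _ (by omega) (by omega)
  have z1 : E (2*n+1) n n * E (2*n+1) (n+2) (n+1) = 0 := E_mul_ne _ _ _ _ _ (by omega)
  have z2 : E (2*n+1) n n * E (2*n+1) (n+1) n = 0 := E_mul_ne _ _ _ _ _ (by omega)
  have z3 : E (2*n+1) (n+1) (n+1) * E (2*n+1) (n+2) (n+1) = 0 := E_mul_ne _ _ _ _ _ (by omega)
  have z4 : E (2*n+1) (n+2) (n+2) * E (2*n+1) (n+1) n = 0 := E_mul_ne _ _ _ _ _ (by omega)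
  have z5 : E (2*n+1) (n+2) (n+1) * E (2*n+1) n n = 0 := E_mul_ne _ _ _ _ _ (by omega)
  have z6 : E (2*n+1) (n+2) (n+1) * E (2*n+1) (n+2) (n+2) = 0 := E_mul_ne _ _ _ _ _ (by omega)
  have z7 : E (2*n+1) (n+1) n * E (2*n+1) (n+1) (n+1) = 0 := E_mul_ne _ _ _ _ _ (by omega)
  have z8 : E (2*n+1) (n+1) n * E (2*n+1) (n+2) (n+2) = 0 := E_mul_ne _ _ _ _ _ (by omega)
  have s1 : zq ((n:ℤ)-1) l * C (q ^ l) * zq n k = zq n (k+l) := by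
    rw [zq_shift, sub_add_cancel, mul_comm, zq_mul]
  have s2 : zq ((n:ℤ)-1) l * zq ((n:ℤ)-1) k = zq ((n:ℤ)-1) (k+l) := by
    rw [mul_comm, zq_mul]
  simp only [aB, xmB, smul_add, smul_sub, Matrix.add_mul, Matrix.mul_add,
    Matrix.sub_mul, Matrix.mul_sub, Matrix.smul_mul, Matrix.mul_smul,
    h1, h2, h3, h4, z1, z2, z3, z4, z5, z6, z7, z8, smul_zero, neg_smul,
    smul_smul, sub_zero, zero_sub, add_zero, zero_add]
  refine Matrix.ext fun r s => ?_
  simp only [Matrix.add_apply, Matrix.sub_apply, Matrix.smul_apply, Matrix.neg_apply,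
    E, Matrix.of_apply, smul_eq_mul, mul_ite, mul_one, mul_zero]
  split_ifs with hA hB hB
  · omega
  · linear_combination (-(LaurentPolynomial.C (qit (2 * l) / (l:F)) * LaurentPolynomial.C (qit 2))) * s2
  · linear_combination (- LaurentPolynomial.C (qit (2 * l) / (l:F))) * s1
  · ring
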